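/- Optimization-dependent metric entropy bound in spectral norm: let m, T be positive integers, V_0,…,V_T ∈ U(4m) fixed unitaries, and F : U(4)^T → U(4m) the circuit map F(U_1,…,U_T) = V_T (U_T ⊗ I_m) ⋯ V_1 (U_1 ⊗ I_m) V_0. For each t ∈ {1,…,T}, let 𝓜_t ⊆ U(4) be a set of admissible gates and c_t ≥ 1 a constant such that for every ε ∈ (0,1] there exists a finite subset of 𝓜_t of cardinality at most (1 + 1/ε)^{c_t} within which every element of 𝓜_t has an element at ℓ²-operator-norm distance at most ε. Fix reference gates U⁰_t ∈ 𝓜_t and numbers Δ_t ∈ [0,2] for t = 1,…,T, and let 𝒞 = { F(U_1,…,U_T) : U_t ∈ 𝓜_t and ‖U_t − U⁰_t‖ ≤ Δ_t for all t }. Then for every K ∈ {0,…,T}, every choice of pairwise distinct indices t_1,…,t_K ∈ {1,…,T}, and every ε ∈ (0,1], there exists a finite set 𝒩 of complex (4m)×(4m) matrices with log |𝒩| ≤ K log T + K (max_{1≤t≤T} c_t) log(1 + K/ε) such that every element of 𝒞 is within ℓ²-operator-norm distance ε + Σ_{t ∉ {t_1,…,t_K}} Δ_t of some element of 𝒩.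 -/

import Mathlib

open Matrix
open scoped Kronecker

/-- The ℓ²→ℓ² operator norm (spectral norm) of a complex square matrix. -/
noncomputable def opNorm {n : Type*} [Fintype n] [DecidableEq n] (A : Matrix n n ℂ) : ℝ :=
  ‖Matrix.toEuclideanCLM (𝕜 := ℂ) A‖

/-- The variational unitary circuit: `circuit V U L = V L * (U (L-1) ⊗ I) * ⋯ * (U 0 ⊗ I) * V 0`,
i.e. `L` layers of 2-qubit gates interleaved with fixed global unitaries on `ℂ^{4m}`. -/
noncomputable def circuit {m : ℕ} (V : ℕ → Matrix (Fin 4 × Fin m) (Fin 4 × Fin m) ℂ)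
    (U : ℕ → Matrix (Fin 4) (Fin 4) ℂ) : ℕ → Matrix (Fin 4 × Fin m) (Fin 4 × Fin m) ℂ
  | 0 => V 0
  | (t + 1) => V (t + 1) * (U t ⊗ₖ (1 : Matrix (Fin m) (Fin m) ℂ)) * circuit V U t

open scoped Matrix.Norms.L2Operator

set_option maxHeartbeats 2000000

lemma opNorm_eq {n : Type*} [Fintype n] [DecidableEq n] (A : Matrix n n ℂ) :
    opNorm A = ‖A‖ := rfl


lemma norm_kron_one_le {m : ℕ} (A : Matrix (Fin 4) (Fin 4) ℂ) :
    ‖A ⊗ₖ (1 : Matrix (Fin m) (Fin m) ℂ)‖ ≤ ‖A‖ := by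
  rw [Matrix.l2_opNorm_def]
  refine ContinuousLinearMap.opNorm_le_bound _ (norm_nonneg _) fun x => ?_
  have entry : ∀ p : Fin 4 × Fin m,
      ((Matrix.toEuclideanLin (A ⊗ₖ (1 : Matrix (Fin m) (Fin m) ℂ))) x) p
        = (A *ᵥ fun k => x (k, p.2)) p.1 := by
    rintro ⟨i, j⟩
    show ((A ⊗ₖ (1 : Matrix (Fin m) (Fin m) ℂ)) *ᵥ fun q => x q) (i, j) = _
    simp [Matrix.mulVec, dotProduct, Matrix.kroneckerMap_apply, Matrix.one_apply,
      Fintype.sum_prod_type, mul_ite, ite_mul, mul_zero, zero_mul, mul_one,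
      Finset.sum_ite_eq, Finset.sum_ite_eq']
  have col : ∀ j : Fin m,
      (∑ i : Fin 4, ‖(A *ᵥ fun k => x (k, j)) i‖ ^ 2)
        ≤ ‖A‖ ^ 2 * ∑ k : Fin 4, ‖x (k, j)‖ ^ 2 := by
    intro j
    set v : EuclideanSpace ℂ (Fin 4) := (WithLp.equiv 2 (Fin 4 → ℂ)).symm (fun k => x (k, j))
    have h1 : ‖(EuclideanSpace.equiv (Fin 4) ℂ).symm (A *ᵥ v)‖ ≤ ‖A‖ * ‖v‖ :=
      Matrix.l2_opNorm_mulVec A v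
    have h2 : ‖(EuclideanSpace.equiv (Fin 4) ℂ).symm (A *ᵥ v)‖ ^ 2
        = ∑ i : Fin 4, ‖(A *ᵥ fun k => x (k, j)) i‖ ^ 2 := by
      rw [EuclideanSpace.norm_eq, Real.sq_sqrt (by positivity)]
      rfl
    have h3 : ‖v‖ ^ 2 = ∑ k : Fin 4, ‖x (k, j)‖ ^ 2 := by
      rw [EuclideanSpace.norm_eq, Real.sq_sqrt (by positivity)]
      rfl
    calc (∑ i : Fin 4, ‖(A *ᵥ fun k => x (k, j)) i‖ ^ 2)
        = ‖(EuclideanSpace.equiv (Fin 4) ℂ).symm (A *ᵥ v)‖ ^ 2 := h2.symm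
      _ ≤ (‖A‖ * ‖v‖) ^ 2 := pow_le_pow_left₀ (norm_nonneg _) h1 2
      _ = ‖A‖ ^ 2 * ∑ k : Fin 4, ‖x (k, j)‖ ^ 2 := by rw [mul_pow, h3]
  have hLHS : ‖(Matrix.toEuclideanLin.trans LinearMap.toContinuousLinearMap
        (A ⊗ₖ (1 : Matrix (Fin m) (Fin m) ℂ))) x‖
      = Real.sqrt (∑ p : Fin 4 × Fin m,
          ‖(A *ᵥ fun k => x (k, p.2)) p.1‖ ^ 2) := by
    have happ : (Matrix.toEuclideanLin.trans LinearMap.toContinuousLinearMap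
        (A ⊗ₖ (1 : Matrix (Fin m) (Fin m) ℂ))) x
        = Matrix.toEuclideanLin (A ⊗ₖ (1 : Matrix (Fin m) (Fin m) ℂ)) x := rfl
    rw [happ, EuclideanSpace.norm_eq]
    congr 1
    exact Finset.sum_congr rfl fun p _ => by rw [entry p]
  have hx : ‖x‖ ^ 2 = ∑ p : Fin 4 × Fin m, ‖x p‖ ^ 2 := by
    rw [EuclideanSpace.norm_eq, Real.sq_sqrt (by positivity)]
  have hswap : (∑ p : Fin 4 × Fin m, ‖(A *ᵥ fun k => x (k, p.2)) p.1‖ ^ 2)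
      = ∑ j : Fin m, ∑ i : Fin 4, ‖(A *ᵥ fun k => x (k, j)) i‖ ^ 2 := by
    rw [Fintype.sum_prod_type]; exact Finset.sum_comm
  have hxswap : (∑ p : Fin 4 × Fin m, ‖x p‖ ^ 2)
      = ∑ j : Fin m, ∑ k : Fin 4, ‖x (k, j)‖ ^ 2 := by
    rw [Fintype.sum_prod_type]; exact Finset.sum_comm
  have hsum : (∑ p : Fin 4 × Fin m, ‖(A *ᵥ fun k => x (k, p.2)) p.1‖ ^ 2)
      ≤ ‖A‖ ^ 2 * ‖x‖ ^ 2 := by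
    rw [hswap, hx, hxswap, Finset.mul_sum]
    exact Finset.sum_le_sum fun j _ => col j
  rw [hLHS]
  calc Real.sqrt (∑ p : Fin 4 × Fin m, ‖(A *ᵥ fun k => x (k, p.2)) p.1‖ ^ 2)
      ≤ Real.sqrt (‖A‖ ^ 2 * ‖x‖ ^ 2) := Real.sqrt_le_sqrt hsum
    _ = ‖A‖ * ‖x‖ := by rw [← mul_pow, Real.sqrt_sq (by positivity)]

lemma sub_kron_one {m : ℕ} (A B : Matrix (Fin 4) (Fin 4) ℂ) :
    (A - B) ⊗ₖ (1 : Matrix (Fin m) (Fin m) ℂ)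
      = A ⊗ₖ (1 : Matrix (Fin m) (Fin m) ℂ) - B ⊗ₖ (1 : Matrix (Fin m) (Fin m) ℂ) := by
  ext ⟨i, j⟩ ⟨k, l⟩
  simp [Matrix.kroneckerMap_apply, Matrix.sub_apply, sub_mul]

lemma norm_mul3_le {n : Type*} [Fintype n] [DecidableEq n] (X Y Z : Matrix n n ℂ)
    (hX : ‖X‖ ≤ 1) (hZ : ‖Z‖ ≤ 1) : ‖X * Y * Z‖ ≤ ‖Y‖ := by
  have h1 := Matrix.l2_opNorm_mul (X * Y) Z
  have h2 := Matrix.l2_opNorm_mul X Y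
  have := norm_nonneg X; have := norm_nonneg Y; have := norm_nonneg Z
  have := norm_nonneg (X * Y)
  nlinarith

lemma circuit_norm_le_one {m : ℕ} (V : ℕ → Matrix (Fin 4 × Fin m) (Fin 4 × Fin m) ℂ)
    (U : ℕ → Matrix (Fin 4) (Fin 4) ℂ) (L : ℕ)
    (hV : ∀ s ≤ L, ‖V s‖ ≤ 1) (hU : ∀ t < L, ‖U t‖ ≤ 1) :
    ‖circuit V U L‖ ≤ 1 := by
  induction L with
  | zero => exact hV 0 le_rfl
  | succ L ih =>
    have h0 : ‖circuit V U L‖ ≤ 1 :=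
      ih (fun s hs => hV s (hs.trans (Nat.le_succ L)))
        (fun t ht => hU t (ht.trans (Nat.lt_succ_self L)))
    have hk : ‖U L ⊗ₖ (1 : Matrix (Fin m) (Fin m) ℂ)‖ ≤ 1 :=
      (norm_kron_one_le (U L)).trans (hU L (Nat.lt_succ_self L))
    have h1 : ‖V (L + 1) * (U L ⊗ₖ (1 : Matrix (Fin m) (Fin m) ℂ)) * circuit V U L‖
        ≤ ‖U L ⊗ₖ (1 : Matrix (Fin m) (Fin m) ℂ)‖ :=
      norm_mul3_le _ _ _ (hV (L + 1) le_rfl) h0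
    exact h1.trans hk

lemma circuit_diff_le {m : ℕ} (V : ℕ → Matrix (Fin 4 × Fin m) (Fin 4 × Fin m) ℂ)
    (U U' : ℕ → Matrix (Fin 4) (Fin 4) ℂ) (L : ℕ)
    (hV : ∀ s ≤ L, ‖V s‖ ≤ 1) (hU : ∀ t < L, ‖U t‖ ≤ 1) (hU' : ∀ t < L, ‖U' t‖ ≤ 1) :
    ‖circuit V U L - circuit V U' L‖ ≤ ∑ t ∈ Finset.range L, ‖U t - U' t‖ := by
  induction L with
  | zero => simp [circuit]
  | succ L ih =>
    have hVL : ∀ s ≤ L, ‖V s‖ ≤ 1 := fun s hs => hV s (hs.trans (Nat.le_succ L))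
    have hUL : ∀ t < L, ‖U t‖ ≤ 1 := fun t ht => hU t (ht.trans (Nat.lt_succ_self L))
    have hUL' : ∀ t < L, ‖U' t‖ ≤ 1 := fun t ht => hU' t (ht.trans (Nat.lt_succ_self L))
    have key : circuit V U (L + 1) - circuit V U' (L + 1)
        = V (L + 1) * (U L ⊗ₖ (1 : Matrix (Fin m) (Fin m) ℂ))
            * (circuit V U L - circuit V U' L)
          + V (L + 1) * ((U L - U' L) ⊗ₖ (1 : Matrix (Fin m) (Fin m) ℂ)) * circuit V U' L := by
      show V (L + 1) * (U L ⊗ₖ (1 : Matrix (Fin m) (Fin m) ℂ)) * circuit V U L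
          - V (L + 1) * (U' L ⊗ₖ (1 : Matrix (Fin m) (Fin m) ℂ)) * circuit V U' L = _
      rw [sub_kron_one]
      noncomm_ring
    have hb1 : ‖V (L + 1) * (U L ⊗ₖ (1 : Matrix (Fin m) (Fin m) ℂ))
        * (circuit V U L - circuit V U' L)‖ ≤ ∑ t ∈ Finset.range L, ‖U t - U' t‖ := by
      have hXY : ‖V (L + 1) * (U L ⊗ₖ (1 : Matrix (Fin m) (Fin m) ℂ))‖ ≤ 1 := by
        have := Matrix.l2_opNorm_mul (V (L + 1)) (U L ⊗ₖ (1 : Matrix (Fin m) (Fin m) ℂ))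
        have hk : ‖U L ⊗ₖ (1 : Matrix (Fin m) (Fin m) ℂ)‖ ≤ 1 :=
          (norm_kron_one_le (U L)).trans (hU L (Nat.lt_succ_self L))
        have hv := hV (L + 1) le_rfl
        have := norm_nonneg (V (L + 1))
        have := norm_nonneg (U L ⊗ₖ (1 : Matrix (Fin m) (Fin m) ℂ))
        nlinarith
      calc ‖V (L + 1) * (U L ⊗ₖ (1 : Matrix (Fin m) (Fin m) ℂ))
            * (circuit V U L - circuit V U' L)‖
          ≤ ‖V (L + 1) * (U L ⊗ₖ (1 : Matrix (Fin m) (Fin m) ℂ))‖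
              * ‖circuit V U L - circuit V U' L‖ := Matrix.l2_opNorm_mul _ _
        _ ≤ 1 * (∑ t ∈ Finset.range L, ‖U t - U' t‖) := by
            apply mul_le_mul hXY (ih hVL hUL hUL') (norm_nonneg _) zero_le_one
        _ = _ := one_mul _
    have hb2 : ‖V (L + 1) * ((U L - U' L) ⊗ₖ (1 : Matrix (Fin m) (Fin m) ℂ))
        * circuit V U' L‖ ≤ ‖U L - U' L‖ := by
      have := norm_mul3_le (V (L + 1)) ((U L - U' L) ⊗ₖ (1 : Matrix (Fin m) (Fin m) ℂ))
        (circuit V U' L) (hV (L + 1) le_rfl) (circuit_norm_le_one V U' L hVL hUL')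
      exact this.trans (norm_kron_one_le _)
    calc ‖circuit V U (L + 1) - circuit V U' (L + 1)‖
        ≤ ‖V (L + 1) * (U L ⊗ₖ (1 : Matrix (Fin m) (Fin m) ℂ))
            * (circuit V U L - circuit V U' L)‖
          + ‖V (L + 1) * ((U L - U' L) ⊗ₖ (1 : Matrix (Fin m) (Fin m) ℂ)) * circuit V U' L‖ := by
          rw [key]; exact norm_add_le _ _
      _ ≤ (∑ t ∈ Finset.range L, ‖U t - U' t‖) + ‖U L - U' L‖ := add_le_add hb1 hb2
      _ = ∑ t ∈ Finset.range (L + 1), ‖U t - U' t‖ := (Finset.sum_range_succ _ _).symm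

/-- Optimization-dependent metric entropy bound: if each admissible gate set `𝓜 t` has
`ε`-covering nets of cardinality at most `(1+1/ε)^{c t}`, then the set of circuits whose `t`-th
gate lies in `𝓜 t` within distance `Δ t` of the reference gate `U₀ t` admits, for every set
`ts` of `K = ts.card` distinct indices, an `(ε + Σ_{t ∉ ts} Δ t)`-covering net `𝒩` with
`log |𝒩| ≤ K log T + K (max_t c_t) log(1 + K/ε)`. -/
theorem optimization_dependent_covering_number (m T : ℕ) (hm : 0 < m) (hT : 0 < T)
    (V : ℕ → Matrix (Fin 4 × Fin m) (Fin 4 × Fin m) ℂ)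
    (hV : ∀ s ≤ T, V s ∈ Matrix.unitaryGroup (Fin 4 × Fin m) ℂ)
    (𝓜 : ℕ → Set (Matrix (Fin 4) (Fin 4) ℂ))
    (h𝓜 : ∀ t < T, 𝓜 t ⊆ Matrix.unitaryGroup (Fin 4) ℂ)
    (c : ℕ → ℝ) (hc : ∀ t < T, 1 ≤ c t)
    (hnet : ∀ t < T, ∀ η : ℝ, 0 < η → η ≤ 1 →
      ∃ 𝒩t : Finset (Matrix (Fin 4) (Fin 4) ℂ), ↑𝒩t ⊆ 𝓜 t ∧
        (𝒩t.card : ℝ) ≤ (1 + 1 / η) ^ (c t) ∧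
        ∀ A ∈ 𝓜 t, ∃ B ∈ 𝒩t, opNorm (A - B) ≤ η)
    (U₀ : ℕ → Matrix (Fin 4) (Fin 4) ℂ) (hU₀ : ∀ t < T, U₀ t ∈ 𝓜 t)
    (Δ : ℕ → ℝ) (hΔ : ∀ t < T, Δ t ∈ Set.Icc (0 : ℝ) 2)
    (ts : Finset ℕ) (hts : ts ⊆ Finset.range T)
    (ε : ℝ) (hε0 : 0 < ε) (hε1 : ε ≤ 1) :
    ∃ 𝒩 : Finset (Matrix (Fin 4 × Fin m) (Fin 4 × Fin m) ℂ),
      Real.log (𝒩.card) ≤ ts.card * Real.log T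
          + ts.card * ((Finset.range T).sup' (Finset.nonempty_range_iff.mpr hT.ne') c)
            * Real.log (1 + ts.card / ε) ∧
      ∀ U : ℕ → Matrix (Fin 4) (Fin 4) ℂ,
        (∀ t < T, U t ∈ 𝓜 t ∧ opNorm (U t - U₀ t) ≤ Δ t) →
        ∃ W ∈ 𝒩, opNorm (circuit V U T - W) ≤ ε + ∑ t ∈ Finset.range T \ ts, Δ t := by
  classical
  haveI : Nonempty (Fin m) := ⟨⟨0, hm⟩⟩
  set M : ℝ := (Finset.range T).sup' (Finset.nonempty_range_iff.mpr hT.ne') c with hM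
  set K' : ℝ := max (ts.card : ℝ) 1 with hK'
  have hK'1 : (1 : ℝ) ≤ K' := le_max_right _ _
  have hK'0 : (0 : ℝ) < K' := lt_of_lt_of_le one_pos hK'1
  set η : ℝ := ε / K' with hηdef
  have hη0 : 0 < η := div_pos hε0 hK'0
  have hη1 : η ≤ 1 := le_trans (div_le_self hε0.le hK'1) hε1
  choose N hNsub hNcard hNcov using fun t (ht : t < T) => hnet t ht η hη0 hη1
  set Nt : ℕ → Finset (Matrix (Fin 4) (Fin 4) ℂ) :=
    fun t => if h : t < T then N t h else ∅ with hNt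
  set f : (∀ a ∈ ts, Matrix (Fin 4) (Fin 4) ℂ) → Matrix (Fin 4 × Fin m) (Fin 4 × Fin m) ℂ :=
    fun σ => circuit V (fun t => if h : t ∈ ts then σ t h else U₀ t) T with hf
  refine ⟨(ts.pi fun t => Nt t).image f, ?_, ?_⟩
  · -- cardinality bound
    have hM1 : (1 : ℝ) ≤ M :=
      le_trans (hc 0 hT) (Finset.le_sup' c (Finset.mem_range.mpr hT))
    have hbase : (0 : ℝ) < 1 + ts.card / ε := by positivity
    have hL0 : 0 ≤ Real.log (1 + ts.card / ε) :=
      Real.log_nonneg (le_add_of_nonneg_right (by positivity))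
    have hlogT : 0 ≤ Real.log T := Real.log_nonneg (by exact_mod_cast hT)
    have hRHS : 0 ≤ (ts.card : ℝ) * Real.log T
        + ts.card * M * Real.log (1 + ts.card / ε) := by positivity
    rcases Finset.eq_empty_or_nonempty ts with hemp | hne
    · subst hemp
      simp
    · have hK1 : (1 : ℝ) ≤ ts.card := by exact_mod_cast Finset.card_pos.mpr hne
      have hKK' : K' = (ts.card : ℝ) := max_eq_left hK1
      have h1η : 1 + 1 / η = 1 + (ts.card : ℝ) / ε := by
        rw [hηdef, one_div_div, hKK']
      by_cases hzero : ((ts.pi fun t => Nt t).image f).card = 0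
      · rw [hzero]; simpa using hRHS
      · have hcard : (((ts.pi fun t => Nt t).image f).card : ℝ)
            ≤ ∏ t ∈ ts, ((1 : ℝ) + ts.card / ε) ^ (c t) := by
          calc (((ts.pi fun t => Nt t).image f).card : ℝ)
              ≤ ((ts.pi fun t => Nt t).card : ℝ) := by
                exact_mod_cast Finset.card_image_le
            _ = ∏ t ∈ ts, ((Nt t).card : ℝ) := by
                rw [Finset.card_pi]; push_cast; ring
            _ ≤ ∏ t ∈ ts, ((1 : ℝ) + ts.card / ε) ^ (c t) := by
                refine Finset.prod_le_prod (fun t _ => Nat.cast_nonneg _) fun t ht' => ?_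
                have hlt : t < T := Finset.mem_range.mp (hts ht')
                have : Nt t = N t hlt := by simp [hNt, dif_pos hlt]
                rw [this, ← h1η]
                exact hNcard t hlt
        have hpos : (0 : ℝ) < ((ts.pi fun t => Nt t).image f).card := by
          exact_mod_cast Nat.pos_of_ne_zero hzero
        calc Real.log (((ts.pi fun t => Nt t).image f).card)
            ≤ Real.log (∏ t ∈ ts, ((1 : ℝ) + ts.card / ε) ^ (c t)) :=
              Real.log_le_log hpos hcard
          _ = ∑ t ∈ ts, Real.log (((1 : ℝ) + ts.card / ε) ^ (c t)) :=
              Real.log_prod fun t _ => (Real.rpow_pos_of_pos hbase _).ne'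
          _ = ∑ t ∈ ts, c t * Real.log (1 + ts.card / ε) := by
              refine Finset.sum_congr rfl fun t _ => ?_
              rw [Real.log_rpow hbase]
          _ ≤ ∑ t ∈ ts, M * Real.log (1 + ts.card / ε) := by
              refine Finset.sum_le_sum fun t ht' => ?_
              exact mul_le_mul_of_nonneg_right
                (Finset.le_sup' c (hts ht')) hL0
          _ = ts.card * M * Real.log (1 + ts.card / ε) := by
              rw [Finset.sum_const, nsmul_eq_mul]; ring
          _ ≤ ts.card * Real.log T + ts.card * M * Real.log (1 + ts.card / ε) := by
              have : 0 ≤ (ts.card : ℝ) * Real.log T := by positivity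
              linarith
  · -- covering
    intro U hU
    have hpick : ∀ t (h : t ∈ ts),
        ∃ B ∈ N t (Finset.mem_range.mp (hts h)), opNorm (U t - B) ≤ η :=
      fun t h => hNcov t _ (U t) (hU t (Finset.mem_range.mp (hts h))).1
    choose B hBmem hBclose using hpick
    set U' : ℕ → Matrix (Fin 4) (Fin 4) ℂ :=
      fun t => if h : t ∈ ts then B t h else U₀ t with hU'def
    have hmem : (fun t h => B t h) ∈ ts.pi fun t => Nt t := by
      rw [Finset.mem_pi]
      intro a h
      have hlt : a < T := Finset.mem_range.mp (hts h)
      simpa [hNt, dif_pos hlt] using hBmem a h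
    refine ⟨f (fun t h => B t h), Finset.mem_image_of_mem f hmem, ?_⟩
    have hfeq : f (fun t h => B t h) = circuit V U' T := rfl
    rw [hfeq, opNorm_eq]
    -- norms ≤ 1
    have hVn : ∀ s ≤ T, ‖V s‖ ≤ 1 := fun s hs =>
      le_of_eq (CStarRing.norm_of_mem_unitary (hV s hs))
    have hUn : ∀ t < T, ‖U t‖ ≤ 1 := fun t ht =>
      le_of_eq (CStarRing.norm_of_mem_unitary (h𝓜 t ht (hU t ht).1))
    have hU'mem : ∀ t < T, U' t ∈ 𝓜 t := by
      intro t ht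
      by_cases h : t ∈ ts
      · simpa [hU'def, dif_pos h] using hNsub t (Finset.mem_range.mp (hts h)) (hBmem t h)
      · simpa [hU'def, dif_neg h] using hU₀ t ht
    have hU'n : ∀ t < T, ‖U' t‖ ≤ 1 := fun t ht =>
      le_of_eq (CStarRing.norm_of_mem_unitary (h𝓜 t ht (hU'mem t ht)))
    have hmain := circuit_diff_le V U U' T hVn hUn hU'n
    refine hmain.trans ?_
    have hsplit : (∑ t ∈ Finset.range T, ‖U t - U' t‖)
        = (∑ t ∈ Finset.range T \ ts, ‖U t - U' t‖) + ∑ t ∈ ts, ‖U t - U' t‖ :=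
      (Finset.sum_sdiff hts).symm
    rw [hsplit]
    have h2 : (∑ t ∈ ts, ‖U t - U' t‖) ≤ ε := by
      have hstep : (∑ t ∈ ts, ‖U t - U' t‖) ≤ ∑ _t ∈ ts, η := by
        refine Finset.sum_le_sum fun t ht' => ?_
        have : U' t = B t ht' := by simp [hU'def, dif_pos ht']
        rw [this, ← opNorm_eq]
        exact hBclose t ht'
      have : (∑ _t ∈ ts, η) = ts.card * η := by
        rw [Finset.sum_const, nsmul_eq_mul]
      rw [this] at hstep
      refine hstep.trans ?_
      have hKle : (ts.card : ℝ) ≤ K' := le_max_left _ _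
      calc (ts.card : ℝ) * η ≤ K' * η :=
            mul_le_mul_of_nonneg_right hKle hη0.le
        _ = ε := by rw [hηdef, mul_div_cancel₀ _ hK'0.ne']
    have h1 : (∑ t ∈ Finset.range T \ ts, ‖U t - U' t‖)
        ≤ ∑ t ∈ Finset.range T \ ts, Δ t := by
      refine Finset.sum_le_sum fun t ht' => ?_
      obtain ⟨htT, htn⟩ := Finset.mem_sdiff.mp ht'
      have : U' t = U₀ t := by simp [hU'def, dif_neg htn]
      rw [this, ← opNorm_eq]
      exact (hU t (Finset.mem_range.mp htT)).2
    linarith
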